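/- Let (ℝⁿ, *_G) be a rational stratified Lie group with lattice N and homogeneous quasi-norm ‖·‖, and let 0 ≤ α₁ < α₂ < 1. Then the covering Q^{α₁}(G;N) = {B(δ_{β₁}(k), r‖k‖^{β₁})}_{k∈N∖{0}} is weakly subordinate to Q^{α₂}(G;N), but Q^{α₂}(G;N) is not weakly subordinate to Q^{α₁}(G;N). -/

import Mathlib

open MeasureTheory

/-- The dilations of a stratified Lie group realized on `ℝⁿ` in coordinates adapted to the
stratification: coordinate `j` has degree `v j` and scales as `r ^ v j`. -/
def dil {n : ℕ} (v : Fin n → ℕ) (r : ℝ) (x : Fin n → ℝ) : Fin n → ℝ :=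
  fun j => r ^ v j * x j

/-- A stratified Lie group realized on `ℝⁿ` through the exponential map: a Lie group
structure `*_G` on `ℝⁿ` with identity `0`, together with degrees `deg j ≥ 1` of the
coordinates (adapted to the stratification) such that the associated dilations are group
automorphisms. -/
structure StratifiedGroup (n : ℕ) where
  mul : (Fin n → ℝ) → (Fin n → ℝ) → (Fin n → ℝ)
  inv : (Fin n → ℝ) → (Fin n → ℝ)
  mul_assoc' : ∀ x y z, mul (mul x y) z = mul x (mul y z)
  zero_mul' : ∀ x, mul 0 x = x
  mul_zero' : ∀ x, mul x 0 = x
  inv_mul' : ∀ x, mul (inv x) x = 0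
  continuous_mul' : Continuous fun p : (Fin n → ℝ) × (Fin n → ℝ) => mul p.1 p.2
  continuous_inv' : Continuous inv
  deg : Fin n → ℕ
  deg_pos : ∀ j, 1 ≤ deg j
  dil_mul : ∀ r : ℝ, 0 < r → ∀ x y, dil deg r (mul x y) = mul (dil deg r x) (dil deg r y)

/-- The homogeneous dimension `Q = ∑ j deg j` of a stratified group. -/
def StratifiedGroup.Q {n : ℕ} (S : StratifiedGroup n) : ℕ := ∑ j, S.deg j

/-- A homogeneous quasi-norm on a stratified Lie group: a continuous, nonnegative,
`1`-homogeneous (for the dilations), symmetric function vanishing exactly at the identity. -/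
structure IsQuasiNorm {n : ℕ} (S : StratifiedGroup n) (N : (Fin n → ℝ) → ℝ) : Prop where
  continuous : Continuous N
  nonneg : ∀ x, 0 ≤ N x
  homogeneous : ∀ r : ℝ, 0 < r → ∀ x, N (dil S.deg r x) = r * N x
  symm : ∀ x, N (S.inv x) = N x
  eq_zero_iff : ∀ x, N x = 0 ↔ x = 0

/-- The quasi-ball `B(c, R) = {h : ‖c⁻¹ *_G h‖ < R}`. -/
def qBall {n : ℕ} (S : StratifiedGroup n) (N : (Fin n → ℝ) → ℝ)
    (c : Fin n → ℝ) (R : ℝ) : Set (Fin n → ℝ) :=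
  {h | N (S.mul (S.inv c) h) < R}

/-- The member of the covering `𝓠ʳ_α(G;N)` attached to the lattice point `k`:
the quasi-ball `B(δ_β(k), r‖k‖^β)` with `β = α/(1-α)` and `δ_β(k) = D^G_{‖k‖^β}(k)`. -/
noncomputable def alphaBall {n : ℕ} (S : StratifiedGroup n) (N : (Fin n → ℝ) → ℝ)
    (r α : ℝ) (k : Fin n → ℝ) : Set (Fin n → ℝ) :=
  qBall S N (dil S.deg (N k ^ (α / (1 - α))) k) (r * N k ^ (α / (1 - α)))

/-!
Since `‖δ_β(k)‖ = ‖k‖^{1+β}` and `(1+β)α = β`, the member of `𝓠^α` attached to `k` is the ball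
`B(c, r‖c‖^α)` about its centre `c = δ_β(k)`. Compactness of `{‖x‖ ≤ 1}` and homogeneity give a
quasi-triangle inequality `‖xy‖ ≤ C(‖x‖ + ‖y‖)`; with `α < 1` it shows that the centres of two
such balls that meet have comparable norms, `‖c‖ ≤ K(1 + ‖d‖)`.

Hence all `α₂`-balls meeting a fixed `α₁`-ball `B(c, r‖c‖^{α₁})` have radius `≍ (1+‖c‖)^{α₂}` and
lie in a ball about `c` of that radius; as `|B(x,R)| = R^Q |B(0,1)|`, the bounded overlap of
`𝓠^{α₂}` bounds their number. Conversely, a ball `B(d, r‖d‖^{α₂})` is covered by the `α₁`-balls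
meeting it, whose radii are `≲ ‖d‖^{α₁}`, so at least `≳ ‖d‖^{Q(α₂-α₁)}` of them are needed; and
`‖d‖` is unbounded because `𝓠^{α₂}` covers the whole group.
-/

open scoped ENNReal in
theorem MeasureTheory.card_mul_le_of_encard_setOf_mem_le {X ι : Type*} [MeasurableSpace X]
    (μ : Measure X) (F : Finset ι) {B : ι → Set X} (hB : ∀ i ∈ F, MeasurableSet (B i))
    {U : Set X} (hU : MeasurableSet U) (hBU : ∀ i ∈ F, B i ⊆ U) {m : ℝ≥0∞}
    (hm : ∀ i ∈ F, m ≤ μ (B i)) {M : ℕ} (hM : ∀ x, {i ∈ (F : Set ι) | x ∈ B i}.encard ≤ M) :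
    F.card * m ≤ M * μ U := by
  classical
  have hpt : ∀ x, ∑ i ∈ F, (B i).indicator 1 x ≤ (M : ℝ≥0∞) * U.indicator 1 x := fun x => by
    by_cases hx : x ∈ U
    · simp only [Set.indicator_apply, Pi.one_apply, hx, if_true, mul_one, Finset.sum_boole]
      have hx := hM x
      rw [show {i ∈ (F : Set ι) | x ∈ B i} = ↑(F.filter (x ∈ B ·)) by ext; simp,
        Set.encard_coe_eq_coe_finsetCard, Nat.cast_le] at hx
      exact_mod_cast hx
    · rw [Finset.sum_eq_zero fun i hi => Set.indicator_of_notMem (fun h => hx (hBU i hi h)) _]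
      exact zero_le
  calc F.card * m = ∑ _i ∈ F, m := by rw [Finset.sum_const, nsmul_eq_mul]
    _ ≤ ∑ i ∈ F, μ (B i) := Finset.sum_le_sum hm
    _ = ∫⁻ x, ∑ i ∈ F, (B i).indicator 1 x ∂μ := by
      rw [lintegral_finsetSum _ fun i hi => measurable_one.indicator (hB i hi)]
      exact Finset.sum_congr rfl fun i hi => (lintegral_indicator_one (hB i hi)).symm
    _ ≤ ∫⁻ x, M * U.indicator 1 x ∂μ := lintegral_mono hpt
    _ = M * μ U := by
      rw [lintegral_const_mul _ (measurable_one.indicator hU), lintegral_indicator_one hU]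

theorem Set.encard_le_coe_of_forall_finset_card_le {α : Type*} {s : Set α} {k : ℕ}
    (h : ∀ F : Finset α, ↑F ⊆ s → F.card ≤ k) : s.encard ≤ k := by
  by_contra hlt
  obtain ⟨t, hts, ht⟩ := Set.exists_subset_encard_eq (Order.add_one_le_of_lt (not_le.1 hlt))
  have htf : t.Finite := Set.finite_of_encard_eq_coe (k := k + 1) (by exact_mod_cast ht)
  have hcard := h htf.toFinset (by simpa using hts)
  rw [← Nat.cast_le (α := ℕ∞), ← Set.encard_coe_eq_coe_finsetCard, htf.coe_toFinset, ht] at hcard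
  exact absurd hcard (by simp [ENat.add_one_le_iff])

theorem Set.encard_setOf_mem_le_of_encard_inter_nonempty_le {X ι : Type*} {I : Set ι}
    {B : ι → Set X} {M : ℕ∞} (h : ∀ i ∈ I, {j ∈ I | (B i ∩ B j).Nonempty}.encard ≤ M)
    (x : X) : {j ∈ I | x ∈ B j}.encard ≤ M := by
  by_cases hx : ∃ i ∈ I, x ∈ B i
  · obtain ⟨i, hi, hxi⟩ := hx
    exact (Set.encard_le_encard fun j (hj : j ∈ I ∧ x ∈ B j) =>
      show j ∈ I ∧ (B i ∩ B j).Nonempty from ⟨hj.1, x, hxi, hj.2⟩).trans (h i hi)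
  · push Not at hx
    rw [Set.sep_eq_empty_iff_mem_false.2 hx, Set.encard_empty]
    exact zero_le

namespace Real

theorem rpow_le_one_add {x α : ℝ} (hx : 0 ≤ x) (h₀ : 0 ≤ α) (h₁ : α ≤ 1) : x ^ α ≤ 1 + x := by
  rcases le_total x 1 with hx1 | hx1
  · linarith [rpow_le_one hx hx1 h₀]
  · calc x ^ α ≤ x ^ (1 : ℝ) := rpow_le_rpow_of_exponent_le hx1 h₁
      _ ≤ 1 + x := by rw [rpow_one]; linarith

theorem exists_mul_rpow_le_half_add {α : ℝ} (h₀ : 0 ≤ α) (h₁ : α < 1) (a : ℝ) :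
    ∃ K, 0 ≤ K ∧ ∀ x, 0 ≤ x → a * x ^ α ≤ x / 2 + K := by
  set X := (2 * |a|) ^ (1 - α)⁻¹
  refine ⟨|a| * (1 + X), by positivity, fun x hx => ?_⟩
  have hax : a * x ^ α ≤ |a| * x ^ α :=
    mul_le_mul_of_nonneg_right (le_abs_self a) (rpow_nonneg hx α)
  rcases le_or_gt x X with hxX | hxX
  · have : x ^ α ≤ 1 + X := (rpow_le_one_add hx h₀ h₁.le).trans (by linarith)
    nlinarith [abs_nonneg a]
  · have hxpos : 0 < x := (rpow_nonneg (by positivity) _).trans_lt hxX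
    have h2a : 2 * |a| ≤ x ^ (1 - α) := by
      calc 2 * |a| = X ^ (1 - α) := (rpow_inv_rpow (by positivity) (by linarith)).symm
        _ ≤ x ^ (1 - α) := rpow_le_rpow (by positivity) hxX.le (by linarith)
    have hsplit : x ^ (1 - α) * x ^ α = x := by
      rw [← rpow_add hxpos, sub_add_cancel, rpow_one]
    have := mul_le_mul_of_nonneg_right h2a (rpow_nonneg hx α)
    have : 0 ≤ |a| * (1 + X) := by positivity
    linarith

theorem eventually_mul_rpow_one_add_lt_rpow {a b : ℝ} (ha : 0 ≤ a) (hab : a < b) {A K : ℝ}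
    (hA : 0 ≤ A) (hK : 0 ≤ K) : ∀ᶠ x in Filter.atTop, A * (K * (1 + x)) ^ a < x ^ b := by
  filter_upwards [Filter.eventually_ge_atTop 1,
    (tendsto_rpow_atTop (sub_pos.2 hab)).eventually_gt_atTop (A * (2 * K) ^ a)] with x hx1 hx
  have hx0 : 0 < x := zero_lt_one.trans_le hx1
  calc A * (K * (1 + x)) ^ a ≤ A * (2 * K) ^ a * x ^ a := by
        rw [mul_assoc, ← mul_rpow (by positivity) hx0.le]
        gcongr A * ?_ ^ a
        nlinarith
    _ < x ^ (b - a) * x ^ a := mul_lt_mul_of_pos_right hx (rpow_pos_of_pos hx0 a)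
    _ = x ^ b := by rw [← rpow_add hx0, sub_add_cancel]

end Real

namespace StratifiedGroup

variable {n : ℕ} (S : StratifiedGroup n)

theorem eq_inv_of_mul_eq_zero {x y : Fin n → ℝ} (h : S.mul x y = 0) : y = S.inv x := by
  rw [← S.zero_mul' y, ← S.inv_mul' x, S.mul_assoc', h, S.mul_zero']

theorem inv_inv (x : Fin n → ℝ) : S.inv (S.inv x) = x :=
  (S.eq_inv_of_mul_eq_zero (S.inv_mul' x)).symm

theorem mul_inv_cancel (x : Fin n → ℝ) : S.mul x (S.inv x) = 0 := by
  simpa only [S.inv_inv] using S.inv_mul' (S.inv x)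

theorem inv_zero : S.inv 0 = 0 :=
  (S.eq_inv_of_mul_eq_zero (S.zero_mul' 0)).symm

theorem mul_inv_cancel_left (x y : Fin n → ℝ) : S.mul x (S.mul (S.inv x) y) = y := by
  rw [← S.mul_assoc', S.mul_inv_cancel, S.zero_mul']

theorem mul_inv_rev (x y : Fin n → ℝ) : S.inv (S.mul x y) = S.mul (S.inv y) (S.inv x) := by
  refine (S.eq_inv_of_mul_eq_zero ?_).symm
  rw [S.mul_assoc', ← S.mul_assoc' y, S.mul_inv_cancel, S.zero_mul', S.mul_inv_cancel]

theorem Q_pos_of_ne_zero {x : Fin n → ℝ} (hx : x ≠ 0) : 0 < S.Q := by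
  obtain ⟨j, -⟩ := Function.ne_iff.mp hx
  exact (S.deg_pos j).trans_lt' zero_lt_one |>.trans_le
    (Finset.single_le_sum (fun i _ => Nat.zero_le (S.deg i)) (Finset.mem_univ j))

end StratifiedGroup

section Dilation

variable {n : ℕ}

theorem dil_dil (v : Fin n → ℕ) (a b : ℝ) (x : Fin n → ℝ) :
    dil v a (dil v b x) = dil v (a * b) x := by
  funext j
  simp only [dil, mul_pow]
  ring

theorem dil_one (v : Fin n → ℕ) (x : Fin n → ℝ) : dil v 1 x = x := by
  funext j
  simp [dil]

theorem continuous_dil (v : Fin n → ℕ) : Continuous fun p : ℝ × (Fin n → ℝ) => dil v p.1 p.2 :=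
  continuous_pi fun j => (continuous_fst.pow _).mul ((continuous_apply j).comp continuous_snd)

theorem exists_pos_norm_dil_eq_one {v : Fin n → ℕ} (hv : ∀ j, 1 ≤ v j) {x : Fin n → ℝ}
    (hx : x ≠ 0) : ∃ s, 0 < s ∧ ‖dil v s x‖ = 1 := by
  obtain ⟨j, hj⟩ := Function.ne_iff.mp hx
  have hxj : 0 < |x j| := abs_pos.mpr hj
  set s₀ := max 1 |x j|⁻¹
  have hs₀ : 1 ≤ s₀ := le_max_left _ _
  have hf : Continuous fun s => ‖dil v s x‖ :=
    ((continuous_dil v).comp (continuous_id.prodMk continuous_const)).norm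
  have h0 : ‖dil v 0 x‖ = 0 := by
    rw [norm_eq_zero]
    funext i
    simp [dil, zero_pow (Nat.one_le_iff_ne_zero.mp (hv i))]
  have h1 : 1 ≤ ‖dil v s₀ x‖ :=
    calc (1 : ℝ) ≤ s₀ * |x j| := by
          rw [← inv_mul_cancel₀ hxj.ne']; gcongr; exact le_max_right _ _
      _ ≤ s₀ ^ v j * |x j| := by gcongr; exact le_self_pow₀ hs₀ (Nat.one_le_iff_ne_zero.mp (hv j))
      _ = ‖dil v s₀ x j‖ := by
          rw [dil, Real.norm_eq_abs, abs_mul, abs_pow, abs_of_pos (zero_lt_one.trans_le hs₀)]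
      _ ≤ ‖dil v s₀ x‖ := norm_le_pi_norm _ j
  obtain ⟨s, hs, hs1⟩ := intermediate_value_Icc (zero_le_one.trans hs₀) hf.continuousOn
    ⟨h0.le.trans zero_le_one, h1⟩
  refine ⟨s, hs.1.lt_of_ne ?_, hs1⟩
  rintro rfl
  simp [h0] at hs1

end Dilation

def qdist {n : ℕ} (S : StratifiedGroup n) (N : (Fin n → ℝ) → ℝ) (x y : Fin n → ℝ) : ℝ :=
  N (S.mul (S.inv x) y)

section QuasiDistance

variable {n : ℕ} {S : StratifiedGroup n} {N : (Fin n → ℝ) → ℝ}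

theorem mem_qBall {c y : Fin n → ℝ} {R : ℝ} : y ∈ qBall S N c R ↔ qdist S N c y < R := Iff.rfl

theorem qBall_subset_qBall {c : Fin n → ℝ} {R R' : ℝ} (h : R ≤ R') :
    qBall S N c R ⊆ qBall S N c R' :=
  fun _ hy => lt_of_lt_of_le hy h

theorem qdist_zero_left (y : Fin n → ℝ) : qdist S N 0 y = N y := by
  rw [qdist, S.inv_zero, S.zero_mul']

theorem qdist_triangle {C : ℝ} (htri : ∀ x y, N (S.mul x y) ≤ C * (N x + N y))
    (x y z : Fin n → ℝ) : qdist S N x z ≤ C * (qdist S N x y + qdist S N y z) := by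
  unfold qdist
  rw [← S.mul_inv_cancel_left y z, ← S.mul_assoc', S.mul_inv_cancel_left]
  exact htri _ _

end QuasiDistance

def powBall {n : ℕ} (S : StratifiedGroup n) (N : (Fin n → ℝ) → ℝ) (r α : ℝ) (c : Fin n → ℝ) :
    Set (Fin n → ℝ) :=
  qBall S N c (r * N c ^ α)

noncomputable def alphaCenter {n : ℕ} (S : StratifiedGroup n) (N : (Fin n → ℝ) → ℝ) (α : ℝ)
    (k : Fin n → ℝ) : Fin n → ℝ :=
  dil S.deg (N k ^ (α / (1 - α))) k

namespace IsQuasiNorm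

open Set Filter
open scoped ENNReal

variable {n : ℕ} {S : StratifiedGroup n} {N : (Fin n → ℝ) → ℝ}

theorem map_zero (hN : IsQuasiNorm S N) : N 0 = 0 := (hN.eq_zero_iff 0).2 rfl

theorem pos (hN : IsQuasiNorm S N) {x : Fin n → ℝ} (hx : x ≠ 0) : 0 < N x :=
  (hN.nonneg x).lt_of_ne' (mt (hN.eq_zero_iff x).1 hx)

theorem isCompact_setOf_le_one (hN : IsQuasiNorm S N) : IsCompact {x | N x ≤ 1} := by
  obtain ⟨m, hm, hmN⟩ := (isCompact_sphere (0 : Fin n → ℝ) 1).exists_forall_le'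
    hN.continuous.continuousOn fun x hx => hN.pos (ne_zero_of_mem_unit_sphere ⟨x, hx⟩)
  refine (((isCompact_Icc (a := 0) (b := m⁻¹)).prod (isCompact_closedBall 0 1)).image
    (continuous_dil S.deg)).of_isClosed_subset (isClosed_le hN.continuous continuous_const) ?_
  intro x hx
  rcases eq_or_ne x 0 with rfl | hx0
  · exact ⟨(0, 0), ⟨⟨le_rfl, by positivity⟩, by simp⟩, by funext j; simp [dil]⟩
  obtain ⟨s, hs, hs1⟩ := exists_pos_norm_dil_eq_one S.deg_pos hx0
  have hms : m ≤ s :=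
    calc m ≤ N (dil S.deg s x) := hmN _ (by simpa using hs1)
      _ = s * N x := hN.homogeneous s hs x
      _ ≤ s := mul_le_of_le_one_right hs.le hx
  refine ⟨(s⁻¹, dil S.deg s x), ⟨⟨by positivity, inv_anti₀ hm hms⟩, by simpa using hs1.le⟩, ?_⟩
  simp [dil_dil, inv_mul_cancel₀ hs.ne', dil_one]

theorem exists_quasi_triangle (hN : IsQuasiNorm S N) :
    ∃ C, 0 < C ∧ ∀ x y, N (S.mul x y) ≤ C * (N x + N y) := by
  obtain ⟨C, hC⟩ := (hN.isCompact_setOf_le_one.prod hN.isCompact_setOf_le_one).bddAbove_image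
    (hN.continuous.comp S.continuous_mul').continuousOn
  refine ⟨max C 1, by positivity, fun x y => ?_⟩
  rcases (add_nonneg (hN.nonneg x) (hN.nonneg y)).eq_or_lt with h | ht
  · have hx : x = 0 := (hN.eq_zero_iff x).1 (by linarith [hN.nonneg x, hN.nonneg y])
    have hy : y = 0 := (hN.eq_zero_iff y).1 (by linarith [hN.nonneg x, hN.nonneg y])
    simp [hx, hy, S.zero_mul', hN.map_zero]
  set t := N x + N y
  have hxy : S.mul x y = dil S.deg t (S.mul (dil S.deg t⁻¹ x) (dil S.deg t⁻¹ y)) := by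
    rw [← S.dil_mul _ (inv_pos.2 ht), dil_dil, mul_inv_cancel₀ ht.ne', dil_one]
  have hmem : (dil S.deg t⁻¹ x, dil S.deg t⁻¹ y) ∈ {x | N x ≤ 1} ×ˢ {x | N x ≤ 1} := by
    simp only [mem_prod, mem_ofPred_eq, hN.homogeneous _ (inv_pos.2 ht),
      inv_mul_le_one₀ ht]
    constructor <;> linarith [hN.nonneg x, hN.nonneg y]
  calc N (S.mul x y) = t * N (S.mul (dil S.deg t⁻¹ x) (dil S.deg t⁻¹ y)) := by
        rw [hxy, hN.homogeneous t ht]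
    _ ≤ t * max C 1 := by
        gcongr
        exact (hC (mem_image_of_mem _ hmem)).trans (le_max_left _ _)
    _ = max C 1 * (N x + N y) := mul_comm _ _

theorem isOpen_qBall (hN : IsQuasiNorm S N) (c : Fin n → ℝ) (R : ℝ) :
    IsOpen (qBall S N c R) :=
  isOpen_lt (hN.continuous.comp (S.continuous_mul'.comp (continuous_const.prodMk continuous_id)))
    continuous_const

theorem volume_setOf_lt (hN : IsQuasiNorm S N) {R : ℝ} (hR : 0 < R) :
    volume {x | N x < R} = ENNReal.ofReal (R ^ S.Q) * volume {x | N x < 1} := by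
  set g : (Fin n → ℝ) →ₗ[ℝ] (Fin n → ℝ) := Matrix.toLin' (Matrix.diagonal fun j => R⁻¹ ^ S.deg j)
  have hg : ∀ x, g x = dil S.deg R⁻¹ x := fun x => by
    funext j
    simp [g, Matrix.toLin'_apply, Matrix.mulVec_diagonal, dil]
  have hdet : LinearMap.det g = R⁻¹ ^ S.Q := by
    rw [LinearMap.det_toLin', Matrix.det_diagonal, StratifiedGroup.Q, Finset.prod_pow_eq_pow_sum]
  have hset : {x | N x < R} = g ⁻¹' {x | N x < 1} := by
    ext x
    simp only [mem_ofPred_eq, mem_preimage, hg, hN.homogeneous _ (inv_pos.2 hR),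
      inv_mul_lt_iff₀ hR, mul_one]
  rw [hset, Measure.addHaar_preimage_linearMap _ (by rw [hdet]; positivity), hdet, inv_pow,
    _root_.inv_inv, abs_of_pos (by positivity)]

theorem volume_qBall (hN : IsQuasiNorm S N)
    (hHaar : ∀ (g : Fin n → ℝ) (A : Set (Fin n → ℝ)),
      volume ((fun h => S.mul g h) ⁻¹' A) = volume A)
    (c : Fin n → ℝ) {R : ℝ} (hR : 0 < R) :
    volume (qBall S N c R) = ENNReal.ofReal (R ^ S.Q) * volume {x | N x < 1} :=
  (hHaar (S.inv c) {x | N x < R}).trans (hN.volume_setOf_lt hR)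

theorem mul_pow_le_of_volume_qBall_le (hN : IsQuasiNorm S N)
    (hHaar : ∀ (g : Fin n → ℝ) (A : Set (Fin n → ℝ)),
      volume ((fun h => S.mul g h) ⁻¹' A) = volume A)
    {a b : ℕ} {c c' : Fin n → ℝ} {R R' : ℝ} (hR : 0 < R) (hR' : 0 < R')
    (h : a * volume (qBall S N c R) ≤ b * volume (qBall S N c' R')) :
    a * R ^ S.Q ≤ b * R' ^ S.Q := by
  have hpos : volume {x | N x < 1} ≠ 0 :=
    ((isOpen_lt hN.continuous continuous_const).measure_pos volume
      ⟨0, by simp [hN.map_zero]⟩).ne'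
  have hfin : volume {x | N x < 1} ≠ ⊤ :=
    ne_top_of_le_ne_top hN.isCompact_setOf_le_one.measure_lt_top.ne
      (measure_mono fun x (hx : N x < 1) => hx.le)
  rw [hN.volume_qBall hHaar c hR, hN.volume_qBall hHaar c' hR', ← mul_assoc, ← mul_assoc,
    ENNReal.mul_le_mul_iff_left hpos hfin, ← ENNReal.ofReal_natCast, ← ENNReal.ofReal_natCast,
    ← ENNReal.ofReal_mul (Nat.cast_nonneg _), ← ENNReal.ofReal_mul (Nat.cast_nonneg _)] at h
  exact (ENNReal.ofReal_le_ofReal_iff (by positivity)).1 h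

theorem qdist_comm (hN : IsQuasiNorm S N) (x y : Fin n → ℝ) :
    qdist S N x y = qdist S N y x := by
  rw [qdist, qdist, ← hN.symm, S.mul_inv_rev, S.inv_inv]

theorem qdist_lt_of_inter_nonempty (hN : IsQuasiNorm S N) {C : ℝ} (hC : 0 < C)
    (htri : ∀ x y, N (S.mul x y) ≤ C * (N x + N y)) {c d : Fin n → ℝ} {ρ ρ' : ℝ}
    (h : (qBall S N c ρ ∩ qBall S N d ρ').Nonempty) : qdist S N c d < C * (ρ + ρ') := by
  obtain ⟨x, hxc, hxd⟩ := h
  calc qdist S N c d ≤ C * (qdist S N c x + qdist S N x d) := qdist_triangle htri c x d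
    _ < C * (ρ + ρ') := by
      rw [hN.qdist_comm x d]
      exact mul_lt_mul_of_pos_left (add_lt_add hxc hxd) hC

theorem qBall_subset_of_inter_nonempty (hN : IsQuasiNorm S N) {C : ℝ} (hC : 0 < C)
    (htri : ∀ x y, N (S.mul x y) ≤ C * (N x + N y)) {c d : Fin n → ℝ} {ρ ρ' : ℝ}
    (h : (qBall S N c ρ ∩ qBall S N d ρ').Nonempty) :
    qBall S N d ρ' ⊆ qBall S N c (C * (C * (ρ + ρ') + ρ')) := fun y hy =>
  calc qdist S N c y ≤ C * (qdist S N c d + qdist S N d y) := qdist_triangle htri c d y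
    _ < C * (C * (ρ + ρ') + ρ') :=
      mul_lt_mul_of_pos_left (add_lt_add (hN.qdist_lt_of_inter_nonempty hC htri h) hy) hC

theorem norm_le_of_mem_powBall (hN : IsQuasiNorm S N) {C : ℝ} (hC : 0 ≤ C)
    (htri : ∀ x y, N (S.mul x y) ≤ C * (N x + N y)) {r α : ℝ} (hr : 0 ≤ r) (h₀ : 0 ≤ α)
    (h₁ : α ≤ 1) {c x : Fin n → ℝ} (hx : x ∈ powBall S N r α c) :
    N x ≤ C * (1 + r) * (1 + N c) := by
  have hα : N c ^ α ≤ 1 + N c := Real.rpow_le_one_add (hN.nonneg c) h₀ h₁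
  calc N x = qdist S N 0 x := (qdist_zero_left x).symm
    _ ≤ C * (qdist S N 0 c + qdist S N c x) := qdist_triangle htri 0 c x
    _ ≤ C * (N c + r * (1 + N c)) := by
      rw [qdist_zero_left]
      gcongr
      exact (mem_qBall.1 hx).le.trans (by gcongr)
    _ ≤ C * (1 + r) * (1 + N c) := by
      rw [mul_assoc]
      gcongr
      nlinarith [hN.nonneg c]

theorem exists_norm_center_le_of_mem_powBall (hN : IsQuasiNorm S N) {C : ℝ} (hC : 0 < C)
    (htri : ∀ x y, N (S.mul x y) ≤ C * (N x + N y)) {r α : ℝ} (h₀ : 0 ≤ α) (h₁ : α < 1) :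
    ∃ K, 0 < K ∧ ∀ c x, x ∈ powBall S N r α c → N c ≤ K * (1 + N x) := by
  obtain ⟨K₀, hK₀, habs⟩ := Real.exists_mul_rpow_le_half_add h₀ h₁ (C * r)
  refine ⟨2 * C + 2 * K₀ + 1, by positivity, fun c x hx => ?_⟩
  have hcx : N c ≤ C * N x + N c / 2 + K₀ :=
    calc N c = qdist S N 0 c := (qdist_zero_left c).symm
      _ ≤ C * (qdist S N 0 x + qdist S N x c) := qdist_triangle htri 0 x c
      _ ≤ C * (N x + r * N c ^ α) := by
        rw [qdist_zero_left, hN.qdist_comm]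
        exact mul_le_mul_of_nonneg_left (by linarith [mem_qBall.1 hx]) hC.le
      _ ≤ C * N x + N c / 2 + K₀ := by
        linarith [habs (N c) (hN.nonneg c)]
  nlinarith [hN.nonneg x]

theorem exists_norm_le_of_powBall_inter_nonempty (hN : IsQuasiNorm S N) {r α α' : ℝ} (hr : 0 ≤ r)
    (h₀ : 0 ≤ α) (h₁ : α < 1) (h₀' : 0 ≤ α') (h₁' : α' ≤ 1) :
    ∃ K, 0 < K ∧ ∀ c d, (powBall S N r α c ∩ powBall S N r α' d).Nonempty →
      N c ≤ K * (1 + N d) := by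
  obtain ⟨C, hC, htri⟩ := hN.exists_quasi_triangle
  obtain ⟨K, hK, hcx⟩ := hN.exists_norm_center_le_of_mem_powBall hC htri h₀ h₁ (r := r)
  refine ⟨K * (1 + C * (1 + r)), by positivity, fun c d ⟨x, hxc, hxd⟩ => ?_⟩
  have hxd' := hN.norm_le_of_mem_powBall hC.le htri hr h₀' h₁' hxd
  calc N c ≤ K * (1 + N x) := hcx c x hxc
    _ ≤ K * (1 + C * (1 + r) * (1 + N d)) := by gcongr
    _ ≤ K * (1 + C * (1 + r)) * (1 + N d) := by
      rw [mul_assoc K]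
      gcongr
      nlinarith [hN.nonneg d, mul_pos hC (by linarith : (0 : ℝ) < 1 + r)]

theorem exists_le_norm_of_iUnion_powBall_eq_univ (hN : IsQuasiNorm S N) {r α : ℝ}
    (hr : 0 ≤ r) (h₀ : 0 ≤ α) (h₁ : α ≤ 1) {ι : Type*} {I : Set ι} {B : ι → Set (Fin n → ℝ)}
    {c : ι → Fin n → ℝ} (hB : ∀ i ∈ I, B i = powBall S N r α (c i))
    (hcov : ⋃ i ∈ I, B i = univ) {x₀ : Fin n → ℝ} (hx₀ : x₀ ≠ 0) (T : ℝ) :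
    ∃ i ∈ I, T ≤ N (c i) := by
  obtain ⟨C, hC, htri⟩ := hN.exists_quasi_triangle
  set R := C * (1 + r) * (1 + |T|)
  have hR : 0 < R := by positivity
  set y := dil S.deg (R / N x₀) x₀
  have hy : N y = R := by
    rw [hN.homogeneous _ (div_pos hR (hN.pos hx₀)), div_mul_cancel₀ _ (hN.pos hx₀).ne']
  obtain ⟨i, hi, hyi⟩ := mem_iUnion₂.1 (hcov ▸ mem_univ y)
  refine ⟨i, hi, ?_⟩
  have := hN.norm_le_of_mem_powBall hC.le htri hr h₀ h₁ (hB i hi ▸ hyi)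
  rw [hy] at this
  have := le_of_mul_le_mul_left this (by positivity)
  linarith [le_abs_self T]

theorem norm_alphaCenter (hN : IsQuasiNorm S N) (α : ℝ) {k : Fin n → ℝ} (hk : k ≠ 0) :
    N (alphaCenter S N α k) = N k ^ (1 + α / (1 - α)) := by
  rw [alphaCenter, hN.homogeneous _ (Real.rpow_pos_of_pos (hN.pos hk) _),
    Real.rpow_add (hN.pos hk), Real.rpow_one, mul_comm]

theorem alphaBall_eq_powBall (hN : IsQuasiNorm S N) {α : ℝ} (hα : α ≠ 1) (r : ℝ)
    {k : Fin n → ℝ} (hk : k ≠ 0) :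
    alphaBall S N r α k = powBall S N r α (alphaCenter S N α k) := by
  rw [powBall, hN.norm_alphaCenter α hk, ← Real.rpow_mul (hN.nonneg k)]
  have : (1 + α / (1 - α)) * α = α / (1 - α) := by
    field_simp [sub_ne_zero.2 hα.symm]
    ring
  rw [this]
  rfl

theorem exists_radius_bounds_of_powBall_inter_nonempty (hN : IsQuasiNorm S N)
    {r α₁ α₂ η : ℝ} (hr : 0 < r) (h₀ : 0 ≤ α₁) (h₁₂ : α₁ ≤ α₂) (h₂ : α₂ < 1) (hη : 0 < η) :
    ∃ a b, 0 < a ∧ 0 < b ∧ ∀ c d, η ≤ N d →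
      (powBall S N r α₂ d ∩ powBall S N r α₁ c).Nonempty →
      a * (1 + N c) ^ α₂ ≤ r * N d ^ α₂ ∧
        powBall S N r α₂ d ⊆ qBall S N c (b * (1 + N c) ^ α₂) := by
  have hα₂ : 0 ≤ α₂ := h₀.trans h₁₂
  obtain ⟨C, hC, htri⟩ := hN.exists_quasi_triangle
  obtain ⟨K₁, hK₁, hcd⟩ :=
    hN.exists_norm_le_of_powBall_inter_nonempty hr.le h₀ (h₁₂.trans_lt h₂) hα₂ h₂.le
  obtain ⟨K₂, hK₂, hdc⟩ :=
    hN.exists_norm_le_of_powBall_inter_nonempty hr.le hα₂ h₂ h₀ (h₁₂.trans h₂.le)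
  set K := (1 + K₁) * (1 + η⁻¹)
  refine ⟨r * K⁻¹ ^ α₂, C * (C * (r + r * K₂ ^ α₂) + r * K₂ ^ α₂), by positivity, by positivity,
    fun c d hd hmeet => ?_⟩
  set W := 1 + N c
  have hW : 1 ≤ W := by linarith [hN.nonneg c]
  have hdW : N d ≤ K₂ * W := hdc d c hmeet
  have hWd : K⁻¹ * W ≤ N d := by
    have hNd : 1 + N d ≤ (1 + η⁻¹) * N d := by
      have : 1 ≤ η⁻¹ * N d := by rw [le_inv_mul_iff₀ hη, mul_one]; exact hd
      linarith
    rw [inv_mul_le_iff₀ (by positivity)]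
    calc W ≤ 1 + K₁ * (1 + N d) := by linarith [hcd c d (inter_comm _ _ ▸ hmeet)]
      _ ≤ (1 + K₁) * (1 + N d) := by nlinarith [hN.nonneg d]
      _ ≤ K * N d := by rw [mul_assoc]; gcongr
  constructor
  · calc r * K⁻¹ ^ α₂ * W ^ α₂ = r * (K⁻¹ * W) ^ α₂ := by
          rw [Real.mul_rpow (by positivity) (by positivity), mul_assoc]
      _ ≤ r * N d ^ α₂ := by gcongr
  · refine (hN.qBall_subset_of_inter_nonempty hC htri (inter_comm _ _ ▸ hmeet)).trans
      (qBall_subset_qBall ?_)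
    have hc : N c ^ α₁ ≤ W ^ α₂ :=
      (Real.rpow_le_rpow (hN.nonneg c) (by linarith) h₀).trans
        (Real.rpow_le_rpow_of_exponent_le hW h₁₂)
    have hd : N d ^ α₂ ≤ K₂ ^ α₂ * W ^ α₂ := by
      rw [← Real.mul_rpow hK₂.le (by positivity)]
      exact Real.rpow_le_rpow (hN.nonneg d) hdW hα₂
    calc C * (C * (r * N c ^ α₁ + r * N d ^ α₂) + r * N d ^ α₂)
        ≤ C * (C * (r * W ^ α₂ + r * (K₂ ^ α₂ * W ^ α₂)) + r * (K₂ ^ α₂ * W ^ α₂)) := by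
          gcongr
      _ = C * (C * (r + r * K₂ ^ α₂) + r * K₂ ^ α₂) * W ^ α₂ := by ring

theorem exists_encard_inter_powBall_le (hN : IsQuasiNorm S N)
    (hHaar : ∀ (g : Fin n → ℝ) (A : Set (Fin n → ℝ)),
      volume ((fun h => S.mul g h) ⁻¹' A) = volume A)
    {r α₁ α₂ η : ℝ} (hr : 0 < r) (h₀ : 0 ≤ α₁) (h₁₂ : α₁ ≤ α₂) (h₂ : α₂ < 1) (hη : 0 < η)
    {ι : Type*} {J : Set ι} {B : ι → Set (Fin n → ℝ)} {d : ι → Fin n → ℝ}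
    (hB : ∀ j ∈ J, B j = powBall S N r α₂ (d j)) (hd : ∀ j ∈ J, η ≤ N (d j)) {M : ℕ}
    (hM : ∀ x, {j ∈ J | x ∈ B j}.encard ≤ M) :
    ∃ M' : ℕ, ∀ c, {j ∈ J | (B j ∩ powBall S N r α₁ c).Nonempty}.encard ≤ M' := by
  obtain ⟨a, b, ha, hb, hab⟩ :=
    hN.exists_radius_bounds_of_powBall_inter_nonempty hr h₀ h₁₂ h₂ hη
  refine ⟨⌈M * (b / a) ^ S.Q⌉₊, fun c => encard_le_coe_of_forall_finset_card_le fun F hF => ?_⟩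
  set s := (1 + N c) ^ α₂
  have hs : 0 < s := Real.rpow_pos_of_pos (by linarith [hN.nonneg c]) _
  have hmem : ∀ j ∈ F, j ∈ J ∧ (powBall S N r α₂ (d j) ∩ powBall S N r α₁ c).Nonempty :=
    fun j hj => ⟨(hF hj).1, hB j (hF hj).1 ▸ (hF hj).2⟩
  have hvol : F.card * volume (qBall S N 0 (a * s)) ≤ M * volume (qBall S N c (b * s)) := by
    refine card_mul_le_of_encard_setOf_mem_le volume F (fun j hj => ?_)
      (hN.isOpen_qBall c _).measurableSet (fun j hj => ?_) (fun j hj => ?_)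
      (fun x => (encard_le_encard fun j (hj : j ∈ (F : Set ι) ∧ x ∈ B j) =>
        show j ∈ J ∧ x ∈ B j from ⟨(hF hj.1).1, hj.2⟩).trans (hM x))
    · rw [hB j (hmem j hj).1]
      exact (hN.isOpen_qBall _ _).measurableSet
    · rw [hB j (hmem j hj).1]
      exact (hab c (d j) (hd j (hmem j hj).1) (hmem j hj).2).2
    · have hrad := (hab c (d j) (hd j (hmem j hj).1) (hmem j hj).2).1
      rw [hB j (hmem j hj).1, powBall, hN.volume_qBall hHaar _ (by positivity),
        hN.volume_qBall hHaar _ (hrad.trans_lt' (by positivity))]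
      gcongr
  have hcount := hN.mul_pow_le_of_volume_qBall_le hHaar (by positivity) (by positivity) hvol
  rw [mul_pow, mul_pow, ← mul_assoc, ← mul_assoc] at hcount
  have hcard : (F.card : ℝ) ≤ M * (b / a) ^ S.Q := by
    rw [div_pow, ← mul_div_assoc, le_div_iff₀ (by positivity)]
    exact le_of_mul_le_mul_right hcount (by positivity)
  exact_mod_cast hcard.trans (Nat.le_ceil _)

theorem exists_volume_bound_of_encard_inter_le (hN : IsQuasiNorm S N)
    (hHaar : ∀ (g : Fin n → ℝ) (A : Set (Fin n → ℝ)),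
      volume ((fun h => S.mul g h) ⁻¹' A) = volume A)
    {r α₁ α₂ : ℝ} (hr : 0 < r) (h₀ : 0 ≤ α₁) (h₁ : α₁ < 1) (h₀' : 0 ≤ α₂) (h₂ : α₂ ≤ 1)
    {ι : Type*} {I : Set ι} {B : ι → Set (Fin n → ℝ)} {c : ι → Fin n → ℝ}
    (hB : ∀ i ∈ I, B i = powBall S N r α₁ (c i)) (hcov : ⋃ i ∈ I, B i = univ) :
    ∃ K, 0 < K ∧ ∀ (M : ℕ) d, 0 < N d →
      {i ∈ I | (B i ∩ powBall S N r α₂ d).Nonempty}.encard ≤ M →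
      (r * N d ^ α₂) ^ S.Q ≤ M * (r * (K * (1 + N d)) ^ α₁) ^ S.Q := by
  obtain ⟨K, hK, hcd⟩ := hN.exists_norm_le_of_powBall_inter_nonempty hr.le h₀ h₁ h₀' h₂
  refine ⟨K, hK, fun M d hd hM => ?_⟩
  set G := {i ∈ I | (B i ∩ powBall S N r α₂ d).Nonempty}
  have hG : G.Finite := finite_of_encard_le_coe hM
  set R := r * (K * (1 + N d)) ^ α₁
  have hR : 0 < R := by positivity
  have hcover : powBall S N r α₂ d ⊆ ⋃ i ∈ hG.toFinset, B i := fun y hy => by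
    obtain ⟨i, hi, hyi⟩ := mem_iUnion₂.1 (hcov ▸ mem_univ y)
    exact mem_biUnion (hG.mem_toFinset.2 ⟨hi, y, hyi, hy⟩) hyi
  have hball : ∀ i ∈ hG.toFinset, volume (B i) ≤ volume (qBall S N 0 R) := fun i hi => by
    obtain ⟨hiI, hmeet⟩ := hG.mem_toFinset.1 hi
    rw [hB i hiI] at hmeet ⊢
    have hci : r * N (c i) ^ α₁ ≤ R :=
      mul_le_mul_of_nonneg_left (Real.rpow_le_rpow (hN.nonneg _) (hcd _ _ hmeet) h₀) hr.le
    rw [hN.volume_qBall hHaar 0 hR, ← hN.volume_qBall hHaar (c i) hR]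
    exact measure_mono (qBall_subset_qBall hci)
  have hcard : hG.toFinset.card ≤ M := by
    rw [← Nat.cast_le (α := ℕ∞), ← encard_coe_eq_coe_finsetCard, hG.coe_toFinset]
    exact hM
  have hvol : ((1 : ℕ) : ℝ≥0∞) * volume (qBall S N d (r * N d ^ α₂)) ≤
      M * volume (qBall S N 0 R) :=
    calc ((1 : ℕ) : ℝ≥0∞) * volume (qBall S N d (r * N d ^ α₂))
        = volume (powBall S N r α₂ d) := by rw [Nat.cast_one, one_mul, powBall]
      _ ≤ ∑ i ∈ hG.toFinset, volume (B i) :=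
        (measure_mono hcover).trans (measure_biUnion_finset_le _ _)
      _ ≤ hG.toFinset.card * volume (qBall S N 0 R) := by
        rw [← nsmul_eq_mul, ← Finset.sum_const]
        exact Finset.sum_le_sum hball
      _ ≤ M * volume (qBall S N 0 R) := by gcongr
  simpa using hN.mul_pow_le_of_volume_qBall_le hHaar (by positivity) hR hvol

theorem not_exists_encard_inter_powBall_le (hN : IsQuasiNorm S N)
    (hHaar : ∀ (g : Fin n → ℝ) (A : Set (Fin n → ℝ)),
      volume ((fun h => S.mul g h) ⁻¹' A) = volume A)
    {r α₁ α₂ : ℝ} (hr : 0 < r) (h₀ : 0 ≤ α₁) (h₁₂ : α₁ < α₂) (h₂ : α₂ ≤ 1)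
    {ι : Type*} {I : Set ι} {B : ι → Set (Fin n → ℝ)} {c : ι → Fin n → ℝ}
    (hB : ∀ i ∈ I, B i = powBall S N r α₁ (c i)) (hcov : ⋃ i ∈ I, B i = univ)
    {κ : Type*} {J : Set κ} {B' : κ → Set (Fin n → ℝ)} {d : κ → Fin n → ℝ}
    (hB' : ∀ j ∈ J, B' j = powBall S N r α₂ (d j)) (hunb : ∀ T, ∃ j ∈ J, T ≤ N (d j)) :
    ¬ ∃ M : ℕ, ∀ j ∈ J, {i ∈ I | (B i ∩ B' j).Nonempty}.encard ≤ M := by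
  rintro ⟨M, hM⟩
  obtain ⟨K, hK, hvol⟩ := hN.exists_volume_bound_of_encard_inter_le hHaar hr h₀
    (h₁₂.trans_le h₂) (h₀.trans h₁₂.le) h₂ hB hcov
  obtain ⟨T, hT⟩ := eventually_atTop.1 (Real.eventually_mul_rpow_one_add_lt_rpow h₀ h₁₂
    (A := M + 1) (K := K) (by positivity) hK.le)
  obtain ⟨j, hj, hTj⟩ := hunb (max T 1)
  have hx : 0 < N (d j) := zero_lt_one.trans_le ((le_max_right _ _).trans hTj)
  have hQ : S.Q ≠ 0 := (S.Q_pos_of_ne_zero (x := d j) fun h => by simp [h, hN.map_zero] at hx).ne'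
  have hle := hvol M (d j) hx (by rw [← hB' j hj]; exact hM j hj)
  have hlt : (M + 1) * (r * (K * (1 + N (d j))) ^ α₁) < r * N (d j) ^ α₂ := by
    have := mul_lt_mul_of_pos_left (hT _ ((le_max_left _ _).trans hTj)) hr
    linarith
  have : (M : ℝ) * (r * (K * (1 + N (d j))) ^ α₁) ^ S.Q < (r * N (d j) ^ α₂) ^ S.Q :=
    calc (M : ℝ) * (r * (K * (1 + N (d j))) ^ α₁) ^ S.Q
        ≤ (M + 1) ^ S.Q * (r * (K * (1 + N (d j))) ^ α₁) ^ S.Q := by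
          gcongr
          exact (le_add_of_nonneg_right zero_le_one).trans (le_self_pow₀ (by simp) hQ)
      _ < (r * N (d j) ^ α₂) ^ S.Q := by
          rw [← mul_pow]
          exact pow_lt_pow_left₀ hlt (by positivity) hQ
  linarith

end IsQuasiNorm

theorem alpha_coverings_weak_subordination_general {n : ℕ}
    (S : StratifiedGroup n) (N : (Fin n → ℝ) → ℝ) (hN : IsQuasiNorm S N)
    (hHaar : ∀ (g : Fin n → ℝ) (A : Set (Fin n → ℝ)),
      volume ((fun h => S.mul g h) ⁻¹' A) = volume A)
    (L : Set (Fin n → ℝ))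
    (hsep : ∃ ε : ℝ, 0 < ε ∧ ∀ k ∈ L, k ≠ 0 → ε ≤ N k)
    (r : ℝ) (hr : 0 < r)
    (α₁ α₂ : ℝ) (h₀ : 0 ≤ α₁) (h₁₂ : α₁ < α₂) (h₂ : α₂ < 1)
    (hcov₁ : ⋃ k ∈ L \ {0}, alphaBall S N r α₁ k = Set.univ)
    (hcov₂ : ⋃ k ∈ L \ {0}, alphaBall S N r α₂ k = Set.univ)
    (hadm₂ : ∃ M : ℕ, ∀ k ∈ L \ {0},
      {l ∈ L \ {0} | (alphaBall S N r α₂ k ∩ alphaBall S N r α₂ l).Nonempty}.encard ≤ (M : ℕ∞)) :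
    (∃ M : ℕ, ∀ k ∈ L \ {0},
      {l ∈ L \ {0} | (alphaBall S N r α₂ l ∩ alphaBall S N r α₁ k).Nonempty}.encard ≤ (M : ℕ∞)) ∧
    ¬ (∃ M : ℕ, ∀ k ∈ L \ {0},
      {l ∈ L \ {0} | (alphaBall S N r α₁ l ∩ alphaBall S N r α₂ k).Nonempty}.encard ≤ (M : ℕ∞)) := by
  obtain ⟨ε, hε, hsep⟩ := hsep
  obtain ⟨M₂, hM₂⟩ := hadm₂
  have hball : ∀ {α}, α < 1 → ∀ k ∈ L \ {0},
      alphaBall S N r α k = powBall S N r α (alphaCenter S N α k) :=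
    fun hα k hk => hN.alphaBall_eq_powBall hα.ne r hk.2
  have hβ₂ : 0 ≤ 1 + α₂ / (1 - α₂) := by
    have : 0 ≤ α₂ / (1 - α₂) := div_nonneg (h₀.trans h₁₂.le) (by linarith)
    linarith
  obtain ⟨M, hM⟩ := hN.exists_encard_inter_powBall_le hHaar hr h₀ h₁₂.le h₂
    (Real.rpow_pos_of_pos hε (1 + α₂ / (1 - α₂))) (hball h₂)
    (fun l hl => hN.norm_alphaCenter α₂ hl.2 ▸ Real.rpow_le_rpow hε.le (hsep l hl.1 hl.2) hβ₂)
    (Set.encard_setOf_mem_le_of_encard_inter_nonempty_le hM₂)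
  obtain ⟨k₀, hk₀, -⟩ := Set.mem_iUnion₂.1 (hcov₂ ▸ Set.mem_univ (0 : Fin n → ℝ))
  have hunb := hN.exists_le_norm_of_iUnion_powBall_eq_univ hr.le (h₀.trans h₁₂.le) h₂.le
    (hball h₂) hcov₂ hk₀.2
  exact ⟨⟨M, fun k hk => hball (h₁₂.trans h₂) k hk ▸ hM _⟩,
    hN.not_exists_encard_inter_powBall_le hHaar hr h₀ h₁₂ h₂.le (hball (h₁₂.trans h₂)) hcov₁
      (hball h₂) hunb⟩

/-- For `0 ≤ α₁ < α₂ < 1`, the covering `𝓠^{α₁}(G;N)` is weakly subordinate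
to `𝓠^{α₂}(G;N)`, while `𝓠^{α₂}(G;N)` is not weakly subordinate to `𝓠^{α₁}(G;N)`. -/
theorem alpha_coverings_weak_subordination {n : ℕ}
    (S : StratifiedGroup n) (N : (Fin n → ℝ) → ℝ) (hN : IsQuasiNorm S N)
    (hHaar : ∀ (g : Fin n → ℝ) (A : Set (Fin n → ℝ)),
      volume ((fun h => S.mul g h) ⁻¹' A) = volume A)
    (L : Set (Fin n → ℝ))
    (hLmul : ∀ a ∈ L, ∀ b ∈ L, S.mul a b ∈ L) (hLinv : ∀ a ∈ L, S.inv a ∈ L)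
    (hsep : ∃ ε : ℝ, 0 < ε ∧ ∀ k ∈ L, k ≠ 0 → ε ≤ N k)
    (r : ℝ) (hr : 0 < r)
    (α₁ α₂ : ℝ) (h₀ : 0 ≤ α₁) (h₁₂ : α₁ < α₂) (h₂ : α₂ < 1)
    (hcov₁ : ⋃ k ∈ L \ {0}, alphaBall S N r α₁ k = Set.univ)
    (hcov₂ : ⋃ k ∈ L \ {0}, alphaBall S N r α₂ k = Set.univ)
    (hadm₁ : ∃ M : ℕ, ∀ k ∈ L \ {0},
      {l ∈ L \ {0} | (alphaBall S N r α₁ k ∩ alphaBall S N r α₁ l).Nonempty}.encard ≤ (M : ℕ∞))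
    (hadm₂ : ∃ M : ℕ, ∀ k ∈ L \ {0},
      {l ∈ L \ {0} | (alphaBall S N r α₂ k ∩ alphaBall S N r α₂ l).Nonempty}.encard ≤ (M : ℕ∞)) :
    (∃ M : ℕ, ∀ k ∈ L \ {0},
      {l ∈ L \ {0} | (alphaBall S N r α₂ l ∩ alphaBall S N r α₁ k).Nonempty}.encard ≤ (M : ℕ∞)) ∧
    ¬ (∃ M : ℕ, ∀ k ∈ L \ {0},
      {l ∈ L \ {0} | (alphaBall S N r α₁ l ∩ alphaBall S N r α₂ k).Nonempty}.encard ≤ (M : ℕ∞)) :=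
  alpha_coverings_weak_subordination_general S N hN hHaar L hsep r hr α₁ α₂ h₀ h₁₂ h₂ hcov₁ hcov₂
    hadm₂
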